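/- arXiv:2109.09249 — 2 statements merged into one kernel-verified Lean document; each statement's English description precedes it below -/
import Mathlib

section
/- Let W be a finite multiset of positive reals and let T' ∈ 𝒯_W be a weighted tree whose underlying graph is not a path. Then there exists a weighted tree T ∈ 𝒯_W, not isomorphic to T', such that T edge-transfers to T' with respect to size. (That is, the maximal elements of the poset (𝒯_W, ⪰_s) are exactly the weighted paths; conversely, no weighted path can be the result of an edge-transfer.) -/
open scoped Classical

noncomputable section

/-- A weighted graph on vertex set `Fin n`: a simple graph together with a symmetric
weight function which is positive on edges and zero on non-edges. -/
structure WGraph (n : ℕ) where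
  G : SimpleGraph (Fin n)
  w : Fin n → Fin n → ℝ
  symm : ∀ u v, w u v = w v u
  pos : ∀ u v, G.Adj u v → 0 < w u v
  zero : ∀ u v, ¬ G.Adj u v → w u v = 0

namespace WGraph

variable {n : ℕ}

/-- The weighted degree `d_G(u) = Σ_v ω(uv)`. -/
def deg (T : WGraph n) (u : Fin n) : ℝ := ∑ v, T.w u v

/-- The volume of the whole graph: sum of all weighted degrees. -/
def vol (T : WGraph n) : ℝ := ∑ u, T.deg u

/-- The combinatorial Laplacian `L = D - A`. -/
def lap (T : WGraph n) : Matrix (Fin n) (Fin n) ℝ :=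
  Matrix.of fun u v => (if u = v then T.deg u else 0) - T.w u v

/-- The normalized Laplacian `𝓛 = D^{-1/2} L D^{-1/2}`. -/
def nlap (T : WGraph n) : Matrix (Fin n) (Fin n) ℝ :=
  Matrix.of fun u v => T.lap u v / (Real.sqrt (T.deg u) * Real.sqrt (T.deg v))

/-- The weight of an (unordered) edge. -/
def ew (T : WGraph n) : Sym2 (Fin n) → ℝ := Sym2.lift ⟨T.w, T.symm⟩

/-- `ω(H)`: the product of the weights of all edges of a (spanning) subgraph `H`. -/
def wOf (T : WGraph n) (H : SimpleGraph (Fin n)) : ℝ := ∏ᶠ e ∈ H.edgeSet, T.ew e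

/-- `τ(G)`: the sum of `ω(H)` over all spanning trees `H` of `G`. -/
def tau (T : WGraph n) : ℝ :=
  ∑ᶠ H ∈ {H : SimpleGraph (Fin n) | H ≤ T.G ∧ H.IsTree}, T.wOf H

/-- The multiset of edge-weights of a weighted graph. -/
def edgeWeights (T : WGraph n) : Multiset ℝ := T.G.edgeFinset.val.map T.ew

end WGraph

/-- The sum of the reciprocals of the nonzero eigenvalues of a hermitian real matrix
(in `ℝ`, `0⁻¹ = 0`, so the zero eigenvalues contribute nothing to the sum). -/
def sumInvEig {n : ℕ} (M : Matrix (Fin n) (Fin n) ℝ) : ℝ :=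
  if h : M.IsHermitian then ∑ i, (h.eigenvalues i)⁻¹ else 0

/-- `H` is a spanning 2-forest of `G`: an acyclic subgraph of `G` on the full
vertex set with exactly two connected components. -/
def IsTwoForestOf {n : ℕ} (G H : SimpleGraph (Fin n)) : Prop :=
  H ≤ G ∧ H.IsAcyclic ∧ Nat.card H.ConnectedComponent = 2

/-- `S(F)`: the product of the numbers of vertices of the components of `F`. -/
def SVal {n : ℕ} (F : SimpleGraph (Fin n)) : ℝ :=
  ∏ᶠ c : F.ConnectedComponent, (Nat.card c.supp : ℝ)

/-- `V_T(F)`: the product over the components of `F` of their volumes in `T`,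
i.e. of the sums of `T`-degrees of their vertices. -/
def VVal {n : ℕ} (T : WGraph n) (F : SimpleGraph (Fin n)) : ℝ :=
  ∏ᶠ c : F.ConnectedComponent, ∑ᶠ u ∈ c.supp, T.deg u

/-- The number of vertices of the connected component of `v` in `H`. -/
def compSize {n : ℕ} (H : SimpleGraph (Fin n)) (v : Fin n) : ℕ :=
  Nat.card ((H.connectedComponentMk v).supp)

/-- The volume of the connected component of `v` in `H`, computed intrinsically
(with the weights of `T`): the sum over vertices `u` of the component of the sum of
weights of edges of the component at `u`. -/
def compVol {n : ℕ} (T : WGraph n) (H : SimpleGraph (Fin n)) (v : Fin n) : ℝ :=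
  ∑ᶠ u ∈ (H.connectedComponentMk v).supp, ∑ᶠ x ∈ (H.connectedComponentMk v).supp, T.w u x

/-- The common part of the two edge-transfer operations: `T'` is obtained from `T` by
deleting the edge `e₂ = v₂v₃` and adding the edge `v₁v₃` carrying the weight of `e₂`,
where `e₁ = v₁v₂` and `e₂ = v₂v₃` are adjacent edges of `T`. -/
def EdgeTransferAux {n : ℕ} (T T' : WGraph n) (v1 v2 v3 : Fin n) : Prop :=
  T.G.Adj v1 v2 ∧ T.G.Adj v2 v3 ∧ v1 ≠ v3 ∧
  T'.G = T.G.deleteEdges {s(v2, v3)} ⊔ SimpleGraph.fromEdgeSet {s(v1, v3)} ∧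
  T'.w v1 v3 = T.w v2 v3 ∧
  (∀ u v : Fin n, s(u, v) ≠ s(v1, v3) → s(u, v) ≠ s(v2, v3) → T'.w u v = T.w u v)

/-- `T` edge-transfers to `T'` with respect to size (via `v₁, v₂, v₃`):
the component `T₁` of `T ∖ {e₁, e₂}` containing `v₁` has more vertices than the
component `T₂` containing `v₂`. -/
def EdgeTransferSize {n : ℕ} (T T' : WGraph n) (v1 v2 v3 : Fin n) : Prop :=
  EdgeTransferAux T T' v1 v2 v3 ∧
  compSize (T.G.deleteEdges {s(v1, v2), s(v2, v3)}) v2 <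
    compSize (T.G.deleteEdges {s(v1, v2), s(v2, v3)}) v1

/-- `T` edge-transfers to `T'` with respect to volume (via `v₁, v₂, v₃`):
the component `T₁` of `T ∖ {e₁, e₂}` containing `v₁` has larger intrinsic volume than
the component `T₂` containing `v₂`. -/
def EdgeTransferVol {n : ℕ} (T T' : WGraph n) (v1 v2 v3 : Fin n) : Prop :=
  EdgeTransferAux T T' v1 v2 v3 ∧
  compVol T (T.G.deleteEdges {s(v1, v2), s(v2, v3)}) v2 <
    compVol T (T.G.deleteEdges {s(v1, v2), s(v2, v3)}) v1

/-- Isomorphism of weighted graphs: a graph isomorphism preserving the weights. -/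
def WIso {n : ℕ} (T T' : WGraph n) : Prop :=
  ∃ f : T.G ≃g T'.G, ∀ u v, T'.w (f u) (f v) = T.w u v

/-- The star graph on `Fin n`, centered at the vertex `0`. -/
def starGraph (n : ℕ) : SimpleGraph (Fin n) :=
  SimpleGraph.fromRel fun u _ => u.val = 0

/-- `T` is a polarized weighted path: its underlying graph is a path
`v₁ v₂ … v_n` and, writing `e_i = v_i v_{i+1}` and `c(e_i) = min {i, n - i}`,
one has `ω(e_i) ≥ ω(e_j)` whenever `c(e_i) ≤ c(e_j)`. -/
def IsPolarizedPath {n : ℕ} (T : WGraph n) : Prop :=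
  ∃ f : SimpleGraph.pathGraph n ≃g T.G,
    ∀ (i j : ℕ) (hi : i + 1 < n) (hj : j + 1 < n),
      min (i + 1) (n - 1 - i) ≤ min (j + 1) (n - 1 - j) →
      T.w (f ⟨j, by omega⟩) (f ⟨j + 1, hj⟩) ≤ T.w (f ⟨i, by omega⟩) (f ⟨i + 1, hi⟩)

/-- Unweighted: adjacency indicator. -/
def adjW {n : ℕ} (G : SimpleGraph (Fin n)) (u v : Fin n) : ℝ := if G.Adj u v then 1 else 0

/-- Unweighted degree. -/
def degG {n : ℕ} (G : SimpleGraph (Fin n)) (u : Fin n) : ℝ := ∑ v, adjW G u v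

/-- The combinatorial Laplacian `L = D - A` of a simple graph. -/
def lapG {n : ℕ} (G : SimpleGraph (Fin n)) : Matrix (Fin n) (Fin n) ℝ :=
  Matrix.of fun u v => (if u = v then degG G u else 0) - adjW G u v

/-- The normalized Laplacian `𝓛 = D^{-1/2} L D^{-1/2}` of a simple graph. -/
def nlapG {n : ℕ} (G : SimpleGraph (Fin n)) : Matrix (Fin n) (Fin n) ℝ :=
  Matrix.of fun u v => lapG G u v / (Real.sqrt (degG G u) * Real.sqrt (degG G v))

/-!
If `T'` is not a path, some vertex `v₁` has three neighbours. Let `v₂` be the neighbour whose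
branch (its component in `T' - v₁v₂`) is smallest, and `v₃`, `u` two further neighbours. Moving
the edge `v₁v₃` to `v₂v₃` (with its weight) gives a tree `T` with the same edge weights, and `T`
edge-transfers back to `T'` via `v₁, v₂, v₃`: the side of `v₂` lies in the branch at `v₂`, which
is no larger than the branch at `u`, while the side of `v₁` contains `v₁` and that whole branch.

`T` and `T'` are not isomorphic because the potential `Φ(G) = Σ (size of the u-side of uv)²`,
summed over oriented edges `uv`, is an isomorphism invariant that strictly increases under every
edge-transfer with respect to size.

Conversely, after an edge-transfer to a path, `v₁` is adjacent to `v₂`, `v₃` and to all its other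
old neighbours, so `v₂` was its only old neighbour; then `T₁ = {v₁}` cannot be larger than `T₂`.
-/

open SimpleGraph

namespace SimpleGraph

section Reachability

variable {V : Type*} {H : SimpleGraph V} {a b c u v x y : V}

theorem reachable_sup_edge_self : (H ⊔ edge x y).Reachable x y := by
  rcases eq_or_ne x y with rfl | hxy
  · rfl
  · exact Adj.reachable (Or.inr ((edge_adj ..).2 ⟨Or.inl ⟨rfl, rfl⟩, hxy⟩))

theorem reachable_sup_edge_iff : (H ⊔ edge x y).Reachable u v ↔ H.Reachable u v ∨
    (H.Reachable u x ∧ H.Reachable y v) ∨ (H.Reachable u y ∧ H.Reachable x v) := by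
  constructor
  · rintro ⟨p⟩
    induction p with
    | nil => exact Or.inl .rfl
    | cons h _ ih =>
      rcases h with h | h
      · rcases ih with h' | ⟨h1, h2⟩ | ⟨h1, h2⟩
        · exact Or.inl (h.reachable.trans h')
        · exact Or.inr (Or.inl ⟨h.reachable.trans h1, h2⟩)
        · exact Or.inr (Or.inr ⟨h.reachable.trans h1, h2⟩)
      · rw [edge_adj] at h
        rcases h with ⟨⟨rfl, rfl⟩ | ⟨rfl, rfl⟩, -⟩ <;> tauto
  · have hle : H ≤ H ⊔ edge x y := le_sup_left
    rintro (h | ⟨h1, h2⟩ | ⟨h1, h2⟩)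
    · exact h.mono hle
    · exact (h1.mono hle).trans (reachable_sup_edge_self.trans (h2.mono hle))
    · exact (h1.mono hle).trans (reachable_sup_edge_self.symm.trans (h2.mono hle))

theorem reachable_sup_edge_congr (h : H.Reachable a b) :
    (H ⊔ edge b c).Reachable u v ↔ (H ⊔ edge a c).Reachable u v := by
  have hu : H.Reachable u a ↔ H.Reachable u b := ⟨(·.trans h), (·.trans h.symm)⟩
  have hv : H.Reachable a v ↔ H.Reachable b v := ⟨h.symm.trans, h.trans⟩
  rw [reachable_sup_edge_iff, reachable_sup_edge_iff, hu, hv]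

theorem sup_edge_deleteEdges (h : ¬H.Adj x y) : (H ⊔ edge x y).deleteEdges {s(x, y)} = H := by
  ext u v
  simp only [deleteEdges_adj, sup_adj, edge_adj, Set.mem_singleton_iff, Sym2.eq_iff]
  grind [Adj.symm]

theorem deleteEdges_sup_edge (h : H.Adj x y) : H.deleteEdges {s(x, y)} ⊔ edge x y = H := by
  ext u v
  simp only [deleteEdges_adj, sup_adj, edge_adj, Set.mem_singleton_iff, Sym2.eq_iff]
  grind [Adj.symm, Adj.ne]

theorem Reachable.deleteIncidenceSet (h : H.Reachable u v) (hx : ¬H.Reachable v x) :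
    (H.deleteIncidenceSet x).Reachable u v := by
  obtain ⟨p⟩ := h
  refine ⟨p.toDeleteEdges _ fun e he hxe => hx ?_⟩
  have hxp : x ∈ p.support := Walk.mem_support_of_mem_edges he hxe.2
  exact ⟨(p.dropUntil x hxp).reverse⟩

end Reachability

section EdgeTransfer

variable {V : Type*} {G : SimpleGraph V} {a b c : V}

def edgeTransfer (G : SimpleGraph V) (a b c : V) : SimpleGraph V :=
  G.deleteEdges {s(b, c)} ⊔ edge a c

theorem edgeTransfer_adj {u v : V} : (G.edgeTransfer a b c).Adj u v ↔
    (G.Adj u v ∧ s(u, v) ≠ s(b, c)) ∨ (s(u, v) = s(a, c) ∧ u ≠ v) := by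
  simp [edgeTransfer, adj_edge, eq_comm]

theorem edgeTransfer_edgeTransfer (hbc : G.Adj b c) (hac : ¬G.Adj a c) :
    (G.edgeTransfer a b c).edgeTransfer b a c = G := by
  ext u v
  simp only [edgeTransfer_adj, Sym2.eq_iff]
  grind [Adj.symm, Adj.ne]

theorem IsAcyclic.not_reachable_deleteEdges (hG : G.IsAcyclic) {x y : V} (h : G.Adj x y)
    {s : Set (Sym2 V)} (hs : s(x, y) ∈ s) : ¬(G.deleteEdges s).Reachable x y := fun hr =>
  isAcyclic_iff_forall_adj_isBridge.mp hG h (hr.mono (deleteEdges_anti (by simpa using hs)))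

theorem IsAcyclic.not_adj_of_adj_of_adj (hG : G.IsAcyclic) (hab : G.Adj a b) (hbc : G.Adj b c) :
    ¬G.Adj a c := fun h =>
  hG.cliqueFree le_rfl {a, b, c} (is3Clique_triple_iff.mpr ⟨hab, h, hbc⟩)

theorem reachable_edgeTransfer (hab : G.Adj a b) (hbc : G.Adj b c) (hac : a ≠ c) {u v : V} :
    (G.edgeTransfer a b c).Reachable u v ↔ G.Reachable u v := by
  have hab' : (G.deleteEdges {s(b, c)}).Reachable a b := by
    refine Adj.reachable ?_
    simp [hab, hab.ne, hac]
  rw [edgeTransfer, ← reachable_sup_edge_congr hab', deleteEdges_sup_edge hbc]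

theorem IsTree.edgeTransfer (hG : G.IsTree) (hab : G.Adj a b) (hbc : G.Adj b c) (hac : a ≠ c) :
    (G.edgeTransfer a b c).IsTree where
  connected := (connected_iff _).mpr
    ⟨fun _ _ => (reachable_edgeTransfer hab hbc hac).mpr (hG.connected _ _), hG.connected.nonempty⟩
  isAcyclic := by
    refine (hG.isAcyclic.anti (deleteEdges_le _)).sup_edge_of_not_reachable fun hac' => ?_
    have hab' : (G.deleteEdges {s(b, c)}).Adj b a := by simp [hab.symm, hab.ne, hac]
    exact hG.isAcyclic.not_reachable_deleteEdges hbc (Set.mem_singleton _)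
      (hab'.reachable.trans hac')

theorem deleteEdges_pair_sup_edge_sup_edge (hab : G.Adj a b) (hbc : G.Adj b c) :
    G.deleteEdges {s(a, b), s(b, c)} ⊔ edge a b ⊔ edge b c = G := by
  ext u v
  simp only [deleteEdges_adj, sup_adj, edge_adj, Set.mem_insert_iff, Set.mem_singleton_iff,
    Sym2.eq_iff]
  grind [Adj.symm, Adj.ne]

theorem edgeTransfer_eq_deleteEdges_pair_sup (hab : G.Adj a b) (hac : a ≠ c) :
    G.edgeTransfer a b c = G.deleteEdges {s(a, b), s(b, c)} ⊔ edge a b ⊔ edge a c := by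
  ext u v
  simp only [edgeTransfer, deleteEdges_adj, sup_adj, edge_adj, Set.mem_insert_iff,
    Set.mem_singleton_iff, Sym2.eq_iff]
  grind [Adj.symm, Adj.ne]

theorem IsAcyclic.not_reachable_deleteEdges_pair (hG : G.IsAcyclic) (hab : G.Adj a b)
    (hbc : G.Adj b c) (hac : a ≠ c) : ¬(G.deleteEdges {s(a, b), s(b, c)}).Reachable a c := by
  intro h
  have hcb : (G.deleteEdges {s(a, b)}).Adj c b := by simp [hbc.symm, hab.ne.symm, hac.symm]
  refine hG.not_reachable_deleteEdges hab (Set.mem_singleton _) ((h.mono ?_).trans hcb.reachable)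
  exact deleteEdges_anti (by simp)

theorem edgeTransfer_deleteEdges_pair (hnac : ¬G.Adj a c) :
    (G.edgeTransfer a b c).deleteEdges {s(b, a), s(a, c)} = G.deleteEdges {s(b, a), s(b, c)} := by
  ext u v
  simp only [deleteEdges_adj, edgeTransfer_adj, Set.mem_insert_iff, Set.mem_singleton_iff]
  grind [Sym2.eq_iff, Adj.symm]

end EdgeTransfer

section Paths

variable {V : Type*} {G : SimpleGraph V}

theorem Connected.exists_adj_dist_add_one_eq (hG : G.Connected) {v₀ v : V} (hv : v ≠ v₀) :
    ∃ z, G.Adj z v ∧ G.dist v₀ z + 1 = G.dist v₀ v := by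
  obtain ⟨p, -, hp⟩ := hG.exists_path_of_dist v₀ v
  have hnil : ¬p.Nil := fun h => hv (h.eq).symm
  refine ⟨p.penultimate, p.adj_penultimate hnil, le_antisymm ?_ ?_⟩
  · have := dist_le p.dropLast
    have := p.length_dropLast_add_one hnil
    omega
  · have := (p.adj_penultimate hnil).reachable.dist_triangle_right v₀
    rw [dist_eq_one_iff_adj.mpr (p.adj_penultimate hnil)] at this
    exact this

theorem IsTree.injective_dist_of_degree_le_two [Fintype V] (hG : G.IsTree) {v₀ : V}
    (hv₀ : G.degree v₀ ≤ 1) (hdeg : ∀ v, G.degree v ≤ 2) : Function.Injective (G.dist v₀) := by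
  have hchild : ∀ z u w, G.Adj z u → G.Adj z w → G.dist v₀ u = G.dist v₀ z + 1 →
      G.dist v₀ w = G.dist v₀ z + 1 → u = w := by
    intro z u w hu hw hdu hdw
    by_contra huw
    by_cases hz : z = v₀
    · subst hz
      have : 1 < G.degree z := by
        rw [← card_neighborFinset_eq_degree, Finset.one_lt_card]
        exact ⟨u, by simpa using hu, w, by simpa using hw, huw⟩
      omega
    · obtain ⟨y, hy, hdy⟩ := hG.connected.exists_adj_dist_add_one_eq hz
      have : 2 < G.degree z := by
        rw [← card_neighborFinset_eq_degree, Finset.two_lt_card]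
        exact ⟨u, by simpa using hu, w, by simpa using hw, y, by simpa using hy.symm, huw,
          by rintro rfl; omega, by rintro rfl; omega⟩
      exact absurd (hdeg z) (by omega)
  have hlevel : ∀ k u w, G.dist v₀ u = k → G.dist v₀ w = k → u = w := by
    intro k
    induction k with
    | zero =>
      intro u w hu hw
      rw [← hG.connected.dist_eq_zero_iff.mp hu, hG.connected.dist_eq_zero_iff.mp hw]
    | succ k ih =>
      intro u w hu hw
      obtain ⟨zu, hzu, hdu⟩ := hG.connected.exists_adj_dist_add_one_eq (v₀ := v₀) (v := u)
        (by rintro rfl; simp at hu)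
      obtain ⟨zw, hzw, hdw⟩ := hG.connected.exists_adj_dist_add_one_eq (v₀ := v₀) (v := w)
        (by rintro rfl; simp at hw)
      obtain rfl := ih zu zw (by omega) (by omega)
      exact hchild zu u w hzu hzw (by omega) (by omega)
  exact fun u w h => hlevel _ u w rfl h.symm

theorem IsTree.nonempty_iso_pathGraph [Fintype V] (hG : G.IsTree) (hdeg : ∀ v, G.degree v ≤ 2) :
    Nonempty (G ≃g pathGraph (Fintype.card V)) := by
  obtain ⟨v₀, hv₀⟩ : ∃ v₀, G.degree v₀ ≤ 1 := by
    cases subsingleton_or_nontrivial V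
    · obtain ⟨v⟩ := hG.connected.nonempty
      refine ⟨v, ?_⟩
      rw [← card_neighborFinset_eq_degree]
      exact Finset.card_le_one.mpr fun a _ b _ => Subsingleton.elim a b
    · obtain ⟨v, hv⟩ := hG.exists_vert_degree_one_of_nontrivial
      exact ⟨v, hv.le⟩
  have hinj := hG.injective_dist_of_degree_le_two hv₀ hdeg
  have hlt : ∀ v, G.dist v₀ v < Fintype.card V := fun v => by
    obtain ⟨p, hp, hlen⟩ := hG.connected.exists_path_of_dist v₀ v
    exact hlen ▸ hp.length_lt
  let f : V → Fin (Fintype.card V) := fun v => ⟨G.dist v₀ v, hlt v⟩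
  have hf : Function.Injective f := fun u w h => hinj (congrArg Fin.val h)
  have hadj : ∀ u w, G.dist v₀ u + 1 = G.dist v₀ w → G.Adj u w := by
    intro u w h
    obtain ⟨z, hz, hdz⟩ := hG.connected.exists_adj_dist_add_one_eq (v₀ := v₀) (v := w)
      (by rintro rfl; simp at h)
    rwa [← hinj (by omega : G.dist v₀ z = G.dist v₀ u)]
  refine ⟨⟨Equiv.ofBijective f ((Fintype.bijective_iff_injective_and_card f).mpr ⟨hf, by simp⟩),
    fun {u w} => ?_⟩⟩
  simp only [Equiv.ofBijective_apply, pathGraph_adj, f]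
  refine ⟨fun h => h.elim (hadj u w) fun h => (hadj w u h).symm, fun h => ?_⟩
  have := hG.dist_eq_dist_add_one_of_adj v₀ h
  omega

theorem Iso.eq_or_eq_or_eq_of_adj_of_adj_of_adj {m : ℕ} (φ : G ≃g pathGraph m) {v x y z : V}
    (hx : G.Adj v x) (hy : G.Adj v y) (hz : G.Adj v z) :
    x = y ∨ x = z ∨ y = z := by
  have hx' := φ.map_adj_iff.mpr hx
  have hy' := φ.map_adj_iff.mpr hy
  have hz' := φ.map_adj_iff.mpr hz
  rw [pathGraph_adj] at hx' hy' hz'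
  simp only [← φ.injective.eq_iff, Fin.ext_iff]
  omega

end Paths

section ComponentSize

variable {n : ℕ} {H K : SimpleGraph (Fin n)} {v x y : Fin n}

theorem compSize_eq_ncard (H : SimpleGraph (Fin n)) (v : Fin n) :
    compSize H v = {u | H.Reachable u v}.ncard := by
  rw [compSize, ← Nat.card_coe_set_eq]
  congr! 2
  ext u
  simp [ConnectedComponent.eq]

theorem compSize_congr (h : ∀ u, H.Reachable u v ↔ K.Reachable u x) :
    compSize H v = compSize K x := by
  simp only [compSize_eq_ncard, h]

theorem compSize_mono (h : H ≤ K) (v : Fin n) : compSize H v ≤ compSize K v := by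
  simp only [compSize_eq_ncard]
  exact Set.ncard_le_ncard (fun _ hu => hu.mono h) (Set.toFinite _)

theorem compSize_pos (H : SimpleGraph (Fin n)) (v : Fin n) : 0 < compSize H v := by
  rw [compSize_eq_ncard]
  exact Set.ncard_pos (Set.toFinite _) |>.mpr ⟨v, .rfl⟩

theorem compSize_sup_edge (h : ¬K.Reachable x y) :
    compSize (K ⊔ edge x y) x = compSize K x + compSize K y := by
  have hunion : {u | (K ⊔ edge x y).Reachable u x} =
      {u | K.Reachable u x} ∪ {u | K.Reachable u y} := by
    ext u
    simp only [Set.mem_ofPred_eq, Set.mem_union, reachable_sup_edge_iff]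
    grind [Reachable.refl, Reachable.symm]
  rw [compSize_eq_ncard, hunion, Set.ncard_union_eq _ (Set.toFinite _) (Set.toFinite _),
    compSize_eq_ncard, compSize_eq_ncard]
  exact Set.disjoint_left.mpr fun u hx hy => h (hx.symm.trans hy)

theorem compSize_sup_edge_of_not_reachable (hx : ¬K.Reachable v x) (hy : ¬K.Reachable v y) :
    compSize (K ⊔ edge x y) v = compSize K v := by
  refine compSize_congr fun u => ?_
  rw [reachable_sup_edge_iff]
  grind [Reachable.symm]

theorem compSize_iso {H' : SimpleGraph (Fin n)} (φ : H ≃g H') (v : Fin n) :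
    compSize H v = compSize H' (φ v) := by
  have : {u | H'.Reachable u (φ v)} = φ '' {u | H.Reachable u v} := by
    ext u
    obtain ⟨u, rfl⟩ := φ.surjective u
    simp [φ.injective.eq_iff, Iso.reachable_iff]
  rw [compSize_eq_ncard, compSize_eq_ncard, this, Set.ncard_image_of_injective _ φ.injective]

theorem compSize_eq_one_of_forall_not_adj {v : Fin n}
    (h : ∀ x, ¬K.Adj v x) : compSize K v = 1 := by
  have : {u | K.Reachable u v} = {v} := by
    ext u
    refine ⟨fun ⟨p⟩ => ?_, fun hu => hu ▸ .rfl⟩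
    cases p.reverse with
    | nil => rfl
    | cons hadj _ => exact absurd hadj (h _)
  rw [compSize_eq_ncard, this, Set.ncard_singleton]

theorem IsAcyclic.compSize_deleteEdges_pair_lt {G : SimpleGraph (Fin n)} (hG : G.IsAcyclic)
    {v b c u : Fin n} (hu : G.Adj v u) (hub : u ≠ b) (huc : u ≠ c)
    (hmin : compSize (G.deleteEdges {s(v, b)}) b ≤ compSize (G.deleteEdges {s(v, u)}) u) :
    compSize (G.deleteEdges {s(v, b), s(v, c)}) b <
      compSize (G.deleteEdges {s(v, b), s(v, c)}) v := by
  set K := G.deleteEdges {s(v, b), s(v, c)}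
  have hKb : compSize K b ≤ compSize (G.deleteEdges {s(v, b)}) b :=
    compSize_mono (deleteEdges_anti (by simp)) b
  have hnr : ¬(G.deleteEdges {s(v, u)}).Reachable u v := fun h =>
    hG.not_reachable_deleteEdges hu (Set.mem_singleton _) h.symm
  have hle : (G.deleteEdges {s(v, u)}).deleteIncidenceSet v ≤ K := by
    intro p q h
    simp only [deleteIncidenceSet_adj, deleteEdges_adj] at h
    simp only [K, deleteEdges_adj, Set.mem_insert_iff, Set.mem_singleton_iff, Sym2.eq_iff]
    grind
  have huv : K.Adj u v := by
    simp only [K, deleteEdges_adj, Set.mem_insert_iff, Set.mem_singleton_iff, Sym2.eq_iff]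
    grind [Adj.symm]
  have hsub : insert v {x | (G.deleteEdges {s(v, u)}).Reachable x u} ⊆ {x | K.Reachable x v} := by
    rintro x (rfl | hx)
    · exact .rfl
    · exact ((hx.deleteIncidenceSet hnr).mono hle).trans huv.reachable
  have hKv : compSize (G.deleteEdges {s(v, u)}) u < compSize K v := by
    have hv : v ∉ {x | (G.deleteEdges {s(v, u)}).Reachable x u} := fun h => hnr h.symm
    rw [compSize_eq_ncard, compSize_eq_ncard, ← Nat.add_one_le_iff,
      ← Set.ncard_insert_of_notMem hv (Set.toFinite _)]
    exact Set.ncard_le_ncard hsub (Set.toFinite _)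
  omega

end ComponentSize

end SimpleGraph

section SizePotential

variable {n : ℕ}

def sideSizeSq (G : SimpleGraph (Fin n)) (u v : Fin n) : ℕ :=
  if G.Adj u v then compSize (G.deleteEdges {s(u, v)}) u ^ 2 else 0

def sizePotential (G : SimpleGraph (Fin n)) : ℕ :=
  ∑ p : Fin n × Fin n, sideSizeSq G p.1 p.2

theorem sideSizeSq_iso {G G' : SimpleGraph (Fin n)} (φ : G ≃g G') (u v : Fin n) :
    sideSizeSq G' (φ u) (φ v) = sideSizeSq G u v := by
  let ψ : G.deleteEdges {s(u, v)} ≃g G'.deleteEdges {s(φ u, φ v)} :=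
    { φ.toEquiv with
      map_rel_iff' := by
        intro x y
        simp [φ.map_adj_iff, φ.injective.eq_iff] }
  simp only [sideSizeSq, φ.map_adj_iff, compSize_iso ψ u]
  rfl

theorem sizePotential_iso {G G' : SimpleGraph (Fin n)} (φ : G ≃g G') :
    sizePotential G = sizePotential G' :=
  Fintype.sum_equiv (φ.toEquiv.prodCongr φ.toEquiv) _ _ fun p => (sideSizeSq_iso φ p.1 p.2).symm

theorem sideSizeSq_sup_edge {H : SimpleGraph (Fin n)} {x y : Fin n} (h : ¬H.Reachable x y) :
    sideSizeSq (H ⊔ edge x y) x y = compSize H x ^ 2 := by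
  have hxy : x ≠ y := fun hxy => h (hxy ▸ .rfl)
  have hadj : (H ⊔ edge x y).Adj x y := Or.inr ((edge_adj ..).2 ⟨Or.inl ⟨rfl, rfl⟩, hxy⟩)
  rw [sideSizeSq, if_pos hadj, sup_edge_deleteEdges fun hadj => h hadj.reachable]

theorem sideSizeSq_sup_edge_congr {H : SimpleGraph (Fin n)} {a b c u v : Fin n}
    (h : (H.deleteEdges {s(u, v)}).Reachable a b) (hbc : s(u, v) ≠ s(b, c))
    (hac : s(u, v) ≠ s(a, c)) :
    sideSizeSq (H ⊔ edge b c) u v = sideSizeSq (H ⊔ edge a c) u v := by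
  have hadj : ∀ {x}, s(u, v) ≠ s(x, c) → ((H ⊔ edge x c).Adj u v ↔ H.Adj u v) := by
    intro x hx
    simp only [sup_adj, adj_edge]
    grind
  have hdel : ∀ {x}, s(u, v) ≠ s(x, c) →
      (H ⊔ edge x c).deleteEdges {s(u, v)} = H.deleteEdges {s(u, v)} ⊔ edge x c := by
    intro x hx
    ext p q
    simp only [deleteEdges_adj, sup_adj, adj_edge, Set.mem_singleton_iff]
    grind
  simp only [sideSizeSq, hadj hbc, hadj hac, hdel hbc, hdel hac,
    compSize_congr fun _ => reachable_sup_edge_congr h]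

theorem sideSizeSq_add_sideSizeSq_sup_edge {H : SimpleGraph (Fin n)} {x y : Fin n}
    (h : ¬H.Reachable x y) :
    sideSizeSq (H ⊔ edge x y) x y + sideSizeSq (H ⊔ edge x y) y x =
      compSize H x ^ 2 + compSize H y ^ 2 := by
  rw [sideSizeSq_sup_edge h, edge_comm, sideSizeSq_sup_edge fun h' => h h'.symm]

theorem sideSizeSq_add_sideSizeSq_of_not_adj {G : SimpleGraph (Fin n)} {x y : Fin n}
    (h : ¬G.Adj x y) : sideSizeSq G x y + sideSizeSq G y x = 0 := by
  have h' : ¬G.Adj y x := fun h' => h h'.symm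
  simp [sideSizeSq, h, h']

theorem sideSizeSq_sup_edge_sup_edge {K : SimpleGraph (Fin n)} {x y z : Fin n}
    (hxy : ¬K.Reachable x y) (hyz : ¬K.Reachable y z) (hxz : ¬K.Reachable x z) :
    sideSizeSq (K ⊔ edge x y ⊔ edge y z) x y + sideSizeSq (K ⊔ edge x y ⊔ edge y z) y x =
        compSize K x ^ 2 + (compSize K y + compSize K z) ^ 2 ∧
      sideSizeSq (K ⊔ edge x y ⊔ edge y z) y z + sideSizeSq (K ⊔ edge x y ⊔ edge y z) z y =
        (compSize K y + compSize K x) ^ 2 + compSize K z ^ 2 ∧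
      sideSizeSq (K ⊔ edge x y ⊔ edge y z) x z + sideSizeSq (K ⊔ edge x y ⊔ edge y z) z x = 0 := by
  have nr : ∀ {p q u v : Fin n}, ¬(K.Reachable u v ∨ (K.Reachable u p ∧ K.Reachable q v) ∨
      (K.Reachable u q ∧ K.Reachable p v)) → ¬(K ⊔ edge p q).Reachable u v := fun h h' =>
    h (reachable_sup_edge_iff.mp h')
  refine ⟨?_, ?_, sideSizeSq_add_sideSizeSq_of_not_adj ?_⟩
  · rw [sup_right_comm K, sideSizeSq_add_sideSizeSq_sup_edge (nr (by tauto)),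
      compSize_sup_edge_of_not_reachable hxy hxz, compSize_sup_edge hyz]
  · rw [sideSizeSq_add_sideSizeSq_sup_edge (nr (by tauto)), edge_comm,
      compSize_sup_edge fun h => hxy h.symm,
      compSize_sup_edge_of_not_reachable (fun h => hyz h.symm) fun h => hxz h.symm]
  · have : ¬K.Adj x z := fun h => hxz h.reachable
    have : x ≠ y := fun h => hxy (h ▸ .rfl)
    have : y ≠ z := fun h => hyz (h ▸ .rfl)
    simp only [sup_adj, adj_edge, Sym2.eq_iff]
    tauto

theorem sideSizeSq_sup_edge_sup_edge_congr {K : SimpleGraph (Fin n)} {a b c u v : Fin n}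
    (hab : a ≠ b) (h1 : s(u, v) ≠ s(a, b)) (h2 : s(u, v) ≠ s(b, c)) (h3 : s(u, v) ≠ s(a, c)) :
    sideSizeSq (K ⊔ edge a b ⊔ edge b c) u v = sideSizeSq (K ⊔ edge a b ⊔ edge a c) u v := by
  refine sideSizeSq_sup_edge_congr (Adj.reachable ?_) h2 h3
  simp only [deleteEdges_adj, sup_adj, adj_edge, Set.mem_singleton_iff]
  grind

theorem sum_six_pairs {α M : Type*} [DecidableEq α] [AddCommMonoid M] {a b c : α}
    (hab : a ≠ b) (hbc : b ≠ c) (hac : a ≠ c) (f : α × α → M) :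
    ∑ p ∈ {(a, b), (b, a), (b, c), (c, b), (a, c), (c, a)}, f p =
      (f (a, b) + f (b, a)) + (f (b, c) + f (c, b)) + (f (a, c) + f (c, a)) := by
  simp [Finset.sum_insert, hab, hbc, hac, hab.symm, hbc.symm, hac.symm, add_assoc]

/- With `A, B, C` the sizes of the components of `a, b, c` in `K`, only the terms of the pairs
`ab, bc, ac` differ; they sum to `A² + (B + C)² + (B + A)² + C²` before and to
`(A + C)² + B² + (A + B)² + C²` after, a gain of `2C(A - B)`. -/
theorem sizePotential_lt {K : SimpleGraph (Fin n)} {a b c : Fin n}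
    (hab : ¬K.Reachable a b) (hbc : ¬K.Reachable b c) (hac : ¬K.Reachable a c)
    (hsize : compSize K b < compSize K a) :
    sizePotential (K ⊔ edge a b ⊔ edge b c) < sizePotential (K ⊔ edge a b ⊔ edge a c) := by
  have hne : a ≠ b ∧ b ≠ c ∧ a ≠ c := by
    refine ⟨?_, ?_, ?_⟩ <;> rintro rfl <;> simp_all
  set S : Finset (Fin n × Fin n) := {(a, b), (b, a), (b, c), (c, b), (a, c), (c, a)}
  have hrest : ∀ p ∈ Sᶜ, sideSizeSq (K ⊔ edge a b ⊔ edge b c) p.1 p.2 =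
      sideSizeSq (K ⊔ edge a b ⊔ edge a c) p.1 p.2 := by
    rintro ⟨u, v⟩ hp
    simp only [S, Finset.mem_compl, Finset.mem_insert, Finset.mem_singleton, Prod.ext_iff,
      not_or] at hp
    exact sideSizeSq_sup_edge_sup_edge_congr hne.1 (by grind [Sym2.eq_iff])
      (by grind [Sym2.eq_iff]) (by grind [Sym2.eq_iff])
  obtain ⟨e1, e2, e3⟩ := sideSizeSq_sup_edge_sup_edge hab hbc hac
  obtain ⟨f1, f2, f3⟩ := sideSizeSq_sup_edge_sup_edge (fun h => hab h.symm) hac hbc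
  rw [edge_comm b a] at f1 f2 f3
  have hC := compSize_pos K c
  rw [sizePotential, sizePotential, ← Finset.sum_add_sum_compl S, ← Finset.sum_add_sum_compl S,
    sum_six_pairs hne.1 hne.2.1 hne.2.2, sum_six_pairs hne.1 hne.2.1 hne.2.2,
    Finset.sum_congr rfl hrest]
  nlinarith

end SizePotential

namespace WGraph

variable {n : ℕ}

/- The new weight is guarded by adjacency in `edge a c` rather than by `s(u, v) = s(a, c)`, so that
it vanishes on the diagonal even when `a = c`. -/
def edgeTransfer (T : WGraph n) (a b c : Fin n) (hbc : T.G.Adj b c) : WGraph n where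
  G := T.G.edgeTransfer a b c
  w u v := if (edge a c).Adj u v then T.w b c else if s(u, v) = s(b, c) then 0 else T.w u v
  symm u v := by simp only [(edge a c).adj_comm u v, Sym2.eq_swap, T.symm u v]
  pos u v h := by
    rw [edgeTransfer_adj] at h
    simp only [adj_edge]
    split_ifs with h1 h2
    · exact T.pos b c hbc
    · grind
    · exact T.pos u v (by grind)
  zero u v h := by
    rw [edgeTransfer_adj] at h
    simp only [adj_edge]
    split_ifs with h1 h2
    · grind
    · rfl
    · exact T.zero u v (by grind)

theorem edgeTransferAux_edgeTransfer (T : WGraph n) {a b c : Fin n} (hba : T.G.Adj b a)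
    (hbc : T.G.Adj b c) (hac : a ≠ c) (hnac : ¬T.G.Adj a c) :
    EdgeTransferAux (T.edgeTransfer a b c hbc) T b a c := by
  refine ⟨?_, ?_, hbc.ne, (edgeTransfer_edgeTransfer hbc hnac).symm, ?_, fun u v h1 h2 => ?_⟩
  · exact edgeTransfer_adj.mpr (Or.inl ⟨hba, by simp [hac, hbc.ne]⟩)
  · exact edgeTransfer_adj.mpr (Or.inr ⟨rfl, hac⟩)
  · simp [edgeTransfer, adj_edge, hac]
  · simp only [edgeTransfer, adj_edge, if_neg (mt And.left (Ne.symm h2)), if_neg h1]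

theorem edgeWeights_edgeTransfer (T : WGraph n) {a b c : Fin n} (hbc : T.G.Adj b c)
    (hac : a ≠ c) (hnac : ¬T.G.Adj a c) :
    (T.edgeTransfer a b c hbc).edgeWeights = T.edgeWeights := by
  have hab : a ≠ b := by rintro rfl; exact hnac hbc
  set σ := Equiv.swap s(b, c) s(a, c)
  have hbc' : s(b, c) ≠ s(a, c) := by simp [hab.symm, hbc.ne]
  have hedges : (T.edgeTransfer a b c hbc).G.edgeFinset = T.G.edgeFinset.map σ.toEmbedding := by
    ext e
    rw [Finset.mem_map_equiv, Equiv.symm_swap, mem_edgeFinset, mem_edgeFinset]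
    induction e using Sym2.ind with | _ u v => ?_
    by_cases h1 : s(u, v) = s(b, c)
    · rw [h1, Equiv.swap_apply_left]
      simp [edgeTransfer, edgeTransfer_adj, hbc', hnac]
    by_cases h2 : s(u, v) = s(a, c)
    · rw [h2, Equiv.swap_apply_right]
      simp [edgeTransfer, edgeTransfer_adj, hac, hbc]
    · rw [Equiv.swap_apply_of_ne_of_ne h1 h2]
      simp [edgeTransfer, edgeTransfer_adj, h1, h2]
  have hw : ∀ e ∈ T.G.edgeFinset, (T.edgeTransfer a b c hbc).ew (σ e) = T.ew e := by
    intro e he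
    induction e using Sym2.ind with | _ u v => ?_
    by_cases h1 : s(u, v) = s(b, c)
    · rw [h1, Equiv.swap_apply_left]
      simp [ew, edgeTransfer, adj_edge, hac]
    by_cases h2 : s(u, v) = s(a, c)
    · rw [mem_edgeFinset, h2] at he
      exact absurd he hnac
    · rw [Equiv.swap_apply_of_ne_of_ne h1 h2]
      simp only [ew, edgeTransfer, Sym2.lift_mk, adj_edge, if_neg (mt And.left (Ne.symm h2)),
        if_neg h1]
  rw [edgeWeights, edgeWeights, hedges, Finset.map_val, Multiset.map_map]
  exact Multiset.map_congr rfl hw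

end WGraph

section SizeTransfer

variable {n : ℕ} {T T' : WGraph n} {v1 v2 v3 : Fin n}

theorem sizePotential_lt_of_edgeTransferSize (hT : T.G.IsTree)
    (h : EdgeTransferSize T T' v1 v2 v3) : sizePotential T.G < sizePotential T'.G := by
  obtain ⟨⟨h12, h23, h13, hT', -, -⟩, hsize⟩ := h
  have hacyc := hT.isAcyclic
  set K := T.G.deleteEdges {s(v1, v2), s(v2, v3)}
  have hG : T.G = K ⊔ edge v1 v2 ⊔ edge v2 v3 := (deleteEdges_pair_sup_edge_sup_edge h12 h23).symm
  have hG' : T'.G = K ⊔ edge v1 v2 ⊔ edge v1 v3 :=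
    hT'.trans (edgeTransfer_eq_deleteEdges_pair_sup h12 h13)
  rw [hG', hG]
  exact sizePotential_lt (hacyc.not_reachable_deleteEdges h12 (by simp))
    (hacyc.not_reachable_deleteEdges h23 (by simp))
    (hacyc.not_reachable_deleteEdges_pair h12 h23 h13) hsize

theorem not_wIso_of_edgeTransferSize (hT : T.G.IsTree) (h : EdgeTransferSize T T' v1 v2 v3) :
    ¬WIso T T' := fun ⟨φ, _⟩ =>
  (sizePotential_lt_of_edgeTransferSize hT h).ne (sizePotential_iso φ)

theorem not_edgeTransferSize_of_iso_pathGraph (hT : T.G.IsTree)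
    (hP : Nonempty (T'.G ≃g pathGraph n)) : ¬EdgeTransferSize T T' v1 v2 v3 := by
  rintro ⟨⟨h12, h23, h13, hT', -, -⟩, hsize⟩
  obtain ⟨φ⟩ := hP
  have hnac := hT.isAcyclic.not_adj_of_adj_of_adj h12 h23
  have hT'adj : ∀ {x y}, T'.G.Adj x y ↔
      (T.G.Adj x y ∧ s(x, y) ≠ s(v2, v3)) ∨ (s(x, y) = s(v1, v3) ∧ x ≠ y) := by
    intro x y
    rw [hT']
    exact edgeTransfer_adj
  have hlone : ∀ x, T.G.Adj v1 x → x = v2 := by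
    intro x hx
    have h2 : T'.G.Adj v1 v2 := hT'adj.mpr (Or.inl ⟨h12, by simp [h13, h12.ne]⟩)
    have h3 : T'.G.Adj v1 v3 := hT'adj.mpr (Or.inr ⟨rfl, h13⟩)
    have hx' : T'.G.Adj v1 x := hT'adj.mpr (Or.inl ⟨hx, by simp [h13, h12.ne]⟩)
    rcases φ.eq_or_eq_or_eq_of_adj_of_adj_of_adj hx' h2 h3 with h | h | h
    · exact h
    · exact absurd (h ▸ hx) hnac
    · exact absurd h h23.ne
  have hisolated : ∀ x, ¬(T.G.deleteEdges {s(v1, v2), s(v2, v3)}).Adj v1 x := by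
    intro x hx
    rw [deleteEdges_adj] at hx
    obtain rfl := hlone x hx.1
    exact hx.2 (by simp)
  have := compSize_pos (T.G.deleteEdges {s(v1, v2), s(v2, v3)}) v2
  rw [compSize_eq_one_of_forall_not_adj hisolated] at hsize
  omega

theorem exists_edgeTransferSize_of_not_iso_pathGraph (hT' : T'.G.IsTree)
    (hnp : ¬Nonempty (T'.G ≃g pathGraph n)) :
    ∃ T : WGraph n, T.G.IsTree ∧ T.edgeWeights = T'.edgeWeights ∧
      ∃ v1 v2 v3, EdgeTransferSize T T' v1 v2 v3 := by
  obtain ⟨v1, hv1⟩ : ∃ v, 2 < T'.G.degree v := by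
    by_contra! h
    have hpath := hT'.nonempty_iso_pathGraph h
    rw [Fintype.card_fin] at hpath
    exact hnp hpath
  set N := T'.G.neighborFinset v1
  have hN : 2 < N.card := by rwa [card_neighborFinset_eq_degree]
  obtain ⟨v2, hv2, hmin⟩ := N.exists_min_image
    (fun u => compSize (T'.G.deleteEdges {s(v1, u)}) u) (Finset.card_pos.mp (by omega))
  obtain ⟨v3, hv3, u, hu, hu3⟩ := Finset.one_lt_card.mp
    (by rw [Finset.card_erase_of_mem hv2]; omega : 1 < (N.erase v2).card)
  have hmin' := hmin u (Finset.mem_of_mem_erase hu)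
  simp only [N, Finset.mem_erase, mem_neighborFinset] at hv2 hv3 hu
  have hn23 := hT'.isAcyclic.not_adj_of_adj_of_adj hv2.symm hv3.2
  refine ⟨T'.edgeTransfer v2 v1 v3 hv3.2, hT'.edgeTransfer hv2.symm hv3.2 hv3.1.symm,
    T'.edgeWeights_edgeTransfer hv3.2 hv3.1.symm hn23, v1, v2, v3,
    T'.edgeTransferAux_edgeTransfer hv2 hv3.2 hv3.1.symm hn23, ?_⟩
  show compSize ((T'.G.edgeTransfer v2 v1 v3).deleteEdges _) v2 <
    compSize ((T'.G.edgeTransfer v2 v1 v3).deleteEdges _) v1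
  rw [edgeTransfer_deleteEdges_pair hn23]
  exact hT'.isAcyclic.compSize_deleteEdges_pair_lt hu.2 hu.1 (Ne.symm hu3) hmin'

end SizeTransfer

theorem stmt12_general (W : Multiset ℝ) {n : ℕ}
    (T' : WGraph n) (hT' : T'.G.IsTree) (hw' : T'.edgeWeights = W)
    (hnp : ¬ Nonempty (T'.G ≃g SimpleGraph.pathGraph n)) :
    (∃ T : WGraph n, T.G.IsTree ∧ T.edgeWeights = W ∧ ¬ WIso T T' ∧
      ∃ v1 v2 v3 : Fin n, EdgeTransferSize T T' v1 v2 v3) ∧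
    (∀ P : WGraph n, P.G.IsTree → P.edgeWeights = W →
      Nonempty (P.G ≃g SimpleGraph.pathGraph n) →
      ∀ (T : WGraph n), T.G.IsTree → ∀ v1 v2 v3 : Fin n, ¬ EdgeTransferSize T P v1 v2 v3) := by
  refine ⟨?_, fun P _ _ hP T hT _ _ _ => not_edgeTransferSize_of_iso_pathGraph hT hP⟩
  obtain ⟨T, hT, hw, v1, v2, v3, h⟩ := exists_edgeTransferSize_of_not_iso_pathGraph hT' hnp
  exact ⟨T, hT, hw.trans hw', not_wIso_of_edgeTransferSize hT h, v1, v2, v3, h⟩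

theorem stmt12 (W : Multiset ℝ) (hW : ∀ x ∈ W, 0 < x) {n : ℕ}
    (T' : WGraph n) (hT' : T'.G.IsTree) (hw' : T'.edgeWeights = W)
    (hnp : ¬ Nonempty (T'.G ≃g SimpleGraph.pathGraph n)) :
    (∃ T : WGraph n, T.G.IsTree ∧ T.edgeWeights = W ∧ ¬ WIso T T' ∧
      ∃ v1 v2 v3 : Fin n, EdgeTransferSize T T' v1 v2 v3) ∧
    (∀ P : WGraph n, P.G.IsTree → P.edgeWeights = W →
      Nonempty (P.G ≃g SimpleGraph.pathGraph n) →
      ∀ (T : WGraph n), T.G.IsTree → ∀ v1 v2 v3 : Fin n, ¬ EdgeTransferSize T P v1 v2 v3) :=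
  stmt12_general W T' hT' hw' hnp
end
end

section
/- Let W be a finite multiset of positive reals. Any two polarized weighted paths in 𝒯_W have the same sum of reciprocals of the nonzero eigenvalues of their combinatorial Laplacians (equivalently, for a path P = v_1…v_n with edges e_i = v_iv_{i+1}, they have the same value of Σ_{i=1}^{n−1} i(n−i)/ω(e_i)). -/
open scoped Classical

noncomputable section

/-!
Let `L` be the Laplacian of a weighted path `v₀ … v_m` (so `n = m + 1`) with edge weights
`w₀, …, w_{m-1}`, and let `xᵢ` be the indicator of `{v₀, …, vᵢ}` minus its mean. Only the edge
`vᵢvᵢ₊₁` leaves `{v₀, …, vᵢ}`, so `L xᵢ = wᵢ (e_{vᵢ} - e_{vᵢ₊₁})`, and telescoping shows that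
`G = ∑ᵢ wᵢ⁻¹ xᵢ xᵢᵀ` satisfies `L G = I - J / n` and `1ᵀ G = 0`. Hence `G` inverts `L` on the
orthogonal complement of the constants, and the sum of the reciprocals of the nonzero eigenvalues
is `tr G = ∑ᵢ (i + 1)(n - i - 1) / (n wᵢ)`. The numerator depends on `i` only through the depth
`c = min (i + 1) (n - i - 1)` of the edge, and in a polarized path the weights decrease with the
depth, so the sum only depends on the multiset of weights.
-/

open Matrix SimpleGraph

section PseudoInverse

variable {n : ℕ} {M G : Matrix (Fin n) (Fin n) ℝ}

lemma dotProduct_mulVec_self_of_mulVec_eq_smul (hM : M.IsHermitian)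
    (hM1 : M *ᵥ (fun _ => 1) = 0) (hMG : M * G = 1 - (n : ℝ)⁻¹ • of fun _ _ => 1)
    (hG1 : (fun _ => 1) ᵥ* G = 0) {v : Fin n → ℝ} {μ : ℝ} (hv : M *ᵥ v = μ • v)
    (hvv : v ⬝ᵥ v = 1) : v ⬝ᵥ (G *ᵥ v) = μ⁻¹ := by
  have hMt : Mᵀ = M := by simpa [conjTranspose_eq_transpose_of_trivial] using hM.eq
  have hvM : v ᵥ* M = μ • v := by rw [← hMt, vecMul_transpose, hv]
  have hμG : μ • (v ᵥ* G) = v - ((n : ℝ)⁻¹ * ∑ k, v k) • fun _ => 1 := by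
    rw [← smul_vecMul, ← hvM, vecMul_vecMul, hMG, vecMul_sub, vecMul_one, vecMul_smul]
    ext i
    simp [vecMul, dotProduct, mul_comm]
  rw [dotProduct_mulVec]
  by_cases hμ : μ = 0
  · have hv_const : v = ((n : ℝ)⁻¹ * ∑ k, v k) • fun _ => 1 := by
      rw [hμ, zero_smul] at hμG
      exact sub_eq_zero.mp hμG.symm
    rw [hμ, _root_.inv_zero, hv_const, smul_vecMul, hG1, smul_zero, zero_dotProduct]
  · have hsum : ∑ k, v k = 0 := by
      have h : μ * ∑ k, v k = 0 :=
        calc μ * ∑ k, v k = (fun _ => 1) ⬝ᵥ (M *ᵥ v) := by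
              simp [hv, dotProduct, Finset.mul_sum]
          _ = 0 := by rw [dotProduct_mulVec, ← hMt, vecMul_transpose, hM1, zero_dotProduct]
      exact (mul_eq_zero.mp h).resolve_left hμ
    rw [hsum, mul_zero, zero_smul, sub_zero] at hμG
    rw [← inv_smul_smul₀ hμ (v ᵥ* G), hμG, smul_dotProduct, hvv, smul_eq_mul, mul_one]

theorem sumInvEig_eq_trace (hM : M.IsHermitian)
    (hM1 : M *ᵥ (fun _ => 1) = 0) (hMG : M * G = 1 - (n : ℝ)⁻¹ • of fun _ _ => 1)
    (hG1 : (fun _ => 1) ᵥ* G = 0) : sumInvEig M = G.trace := by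
  set U : Matrix (Fin n) (Fin n) ℝ := (hM.eigenvectorUnitary : Matrix (Fin n) (Fin n) ℝ)
  have hUU : U * star U = 1 := Unitary.mul_star_self_of_mem hM.eigenvectorUnitary.2
  have hunit : ∀ j, (hM.eigenvectorBasis j : Fin n → ℝ) ⬝ᵥ hM.eigenvectorBasis j = 1 := fun j => by
    have h := inner_self_eq_one_of_norm_eq_one (𝕜 := ℝ) (hM.eigenvectorBasis.orthonormal.1 j)
    rwa [EuclideanSpace.inner_eq_star_dotProduct, star_trivial] at h
  rw [sumInvEig, dif_pos hM, ← Matrix.mul_one G, ← hUU, ← Matrix.mul_assoc, trace_mul_cycle]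
  refine Finset.sum_congr rfl fun i _ => ?_
  rw [diag_apply, mul_mul_apply, star_eq_conjTranspose, conjTranspose_eq_transpose_of_trivial]
  exact (dotProduct_mulVec_self_of_mulVec_eq_smul hM hM1 hMG hG1
    (hM.mulVec_eigenvectorBasis i) (hunit i)).symm

end PseudoInverse

namespace WGraph

variable {n : ℕ} (T : WGraph n)

lemma lap_isHermitian : T.lap.IsHermitian := by
  ext u v
  simp only [conjTranspose_apply, lap, of_apply, star_trivial, T.symm v u, eq_comm (a := v)]
  split_ifs with h
  · rw [h]
  · rfl

lemma lap_mulVec_apply (φ : Fin n → ℝ) (u : Fin n) :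
    (T.lap *ᵥ φ) u = ∑ v, T.w u v * (φ u - φ v) := by
  simp [lap, mulVec, dotProduct, sub_mul, mul_sub, Finset.sum_sub_distrib, deg, Finset.sum_mul]

lemma lap_mulVec_one : T.lap *ᵥ (fun _ => 1) = 0 := by
  ext u
  simp [lap_mulVec_apply]

end WGraph

lemma pathGraph_adj_iff_exists {m : ℕ} {a b : Fin (m + 1)} :
    (pathGraph (m + 1)).Adj a b ↔
      ∃ j : Fin m, a = j.castSucc ∧ b = j.succ ∨ a = j.succ ∧ b = j.castSucc := by
  constructor
  · rw [pathGraph_adj]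
    rintro (h | h)
    · exact ⟨⟨a, by omega⟩, Or.inl ⟨rfl, Fin.ext (by simp [h])⟩⟩
    · exact ⟨⟨b, by omega⟩, Or.inr ⟨Fin.ext (by simp [h]), rfl⟩⟩
  · rintro ⟨j, ⟨rfl, rfl⟩ | ⟨rfl, rfl⟩⟩ <;> simp [pathGraph_adj]

lemma Fin.sum_ite_eq_castSucc_mul {R : Type*} [NonAssocSemiring R] {m : ℕ} (a : Fin (m + 1))
    {g : Fin (m + 1) → R}
    (hg : g (Fin.last m) = 0) :
    ∑ i : Fin m, (if a = i.castSucc then 1 else 0) * g i.castSucc = g a := by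
  simpa [hg] using (Fin.sum_univ_castSucc fun k => (if a = k then 1 else 0) * g k).symm

lemma Fin.sum_ite_eq_succ_mul {R : Type*} [NonAssocSemiring R] {m : ℕ} (a : Fin (m + 1))
    {g : Fin (m + 1) → R} (hg : g 0 = 0) :
    ∑ i : Fin m, (if a = i.succ then 1 else 0) * g i.succ = g a := by
  simpa [hg] using (Fin.sum_univ_succ fun k => (if a = k then 1 else 0) * g k).symm

section CenteredPrefix

variable {m : ℕ}

def centeredPrefix (i : Fin m) (a : Fin (m + 1)) : ℝ :=
  (if a ≤ i.castSucc then 1 else 0) - ((i : ℝ) + 1) / (m + 1)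

lemma centeredPrefix_castSucc_sub_succ (i j : Fin m) :
    centeredPrefix i j.castSucc - centeredPrefix i j.succ = if j = i then 1 else 0 := by
  simp only [centeredPrefix, sub_sub_sub_cancel_right, Fin.castSucc_le_castSucc_iff,
    Fin.succ_le_castSucc_iff]
  rcases lt_trichotomy j i with h | rfl | h
  · simp [h.le, h, h.ne]
  · simp
  · simp [h.not_ge, h.not_gt, h.ne']

lemma sum_sub_ite_mul_centeredPrefix (a c : Fin (m + 1)) :
    ∑ i : Fin m, ((if a = i.castSucc then 1 else 0) - (if a = i.succ then 1 else 0)) *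
        centeredPrefix i c = (if a = c then 1 else 0) - 1 / (m + 1) := by
  have hm : (m : ℝ) + 1 ≠ 0 := by positivity
  let H : Fin (m + 1) → ℝ := fun k => (if c ≤ k then 1 else 0) - ((k : ℝ) + 1) / (m + 1)
  let H' : Fin (m + 1) → ℝ := fun k => (if c < k then 1 else 0) - (k : ℝ) / (m + 1)
  have hH : ∀ i : Fin m, centeredPrefix i c = H i.castSucc := fun i => by
    simp [H, centeredPrefix]
  have hH' : ∀ i : Fin m, centeredPrefix i c = H' i.succ := fun i => by
    have : c < i.succ ↔ c ≤ i.castSucc := by simp [Fin.lt_def, Fin.le_def]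
    simp [H', centeredPrefix, this]
  have hdiff : H a - H' a =
      ((if c ≤ a then 1 else 0) - (if c < a then 1 else 0)) - 1 / (m + 1) := by
    simp only [H, H']
    field_simp
    ring
  calc _ = ∑ i : Fin m, (if a = i.castSucc then 1 else 0) * H i.castSucc -
        ∑ i : Fin m, (if a = i.succ then 1 else 0) * H' i.succ := by
        rw [← Finset.sum_sub_distrib]
        exact Finset.sum_congr rfl fun i _ => by rw [sub_mul, ← hH, ← hH']
    _ = H a - H' a := by
        rw [Fin.sum_ite_eq_castSucc_mul a (by simp [H, Fin.le_last, div_self hm]),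
          Fin.sum_ite_eq_succ_mul a (by simp [H'])]
    _ = _ := by
        rw [hdiff]
        congr 1
        split_ifs <;> grind

lemma card_filter_le_castSucc (i : Fin m) :
    (Finset.univ.filter fun a : Fin (m + 1) => a ≤ i.castSucc).card = i + 1 := by
  rw [Finset.filter_ge_eq_Iic, Fin.card_Iic]
  simp

lemma sum_centeredPrefix (i : Fin m) : ∑ a, centeredPrefix i a = 0 := by
  simp [centeredPrefix, Finset.sum_sub_distrib, card_filter_le_castSucc]
  field_simp
  ring

lemma centeredPrefix_dotProduct_self (i : Fin m) :
    centeredPrefix i ⬝ᵥ centeredPrefix i = (i + 1) * (m - i) / (m + 1) := by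
  set p : ℝ := ((i : ℝ) + 1) / (m + 1)
  have hsq : ∀ a : Fin (m + 1), centeredPrefix i a * centeredPrefix i a =
      (if a ≤ i.castSucc then 1 else 0) * (1 - 2 * p) + p ^ 2 := fun a => by
    simp only [centeredPrefix]
    split_ifs <;> ring
  simp only [dotProduct, hsq, Finset.sum_add_distrib, ← Finset.sum_mul, Finset.sum_boole,
    card_filter_le_castSucc, Finset.sum_const, Finset.card_univ, Fintype.card_fin, nsmul_eq_mul]
  simp only [p]
  field_simp
  push_cast
  ring

end CenteredPrefix

section WeightedPath

variable {m : ℕ} {T : WGraph (m + 1)} (f : pathGraph (m + 1) ≃g T.G)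

def pathWeight (i : Fin m) : ℝ := T.w (f i.castSucc) (f i.succ)

lemma pathWeight_pos (i : Fin m) : 0 < pathWeight f i :=
  T.pos _ _ (f.map_adj_iff.mpr (pathGraph_adj.mpr (Or.inl rfl)))

lemma lap_mulVec_centeredPrefix_apply (i : Fin m) (a : Fin (m + 1)) :
    (T.lap *ᵥ (centeredPrefix i ∘ f.symm)) (f a) =
      pathWeight f i * ((if a = i.castSucc then 1 else 0) - (if a = i.succ then 1 else 0)) := by
  rw [T.lap_mulVec_apply, ← Equiv.sum_comp f.toEquiv]
  have hterm : ∀ b, T.w (f a) (f b) * (centeredPrefix i a - centeredPrefix i b) =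
      pathWeight f i * ((if b = i.succ then if a = i.castSucc then 1 else 0 else 0) -
        (if b = i.castSucc then if a = i.succ then 1 else 0 else 0)) := by
    intro b
    by_cases hadj : (pathGraph (m + 1)).Adj a b
    · have hcross : ∀ j : Fin m, ¬ (j.succ = i.castSucc ∧ j.castSucc = i.succ) := fun j h => by
        simp only [Fin.ext_iff, Fin.val_succ, Fin.val_castSucc] at h
        omega
      obtain ⟨j, ⟨rfl, rfl⟩ | ⟨rfl, rfl⟩⟩ := pathGraph_adj_iff_exists.mp hadj
      · rw [centeredPrefix_castSucc_sub_succ]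
        by_cases hj : j = i
        · simp [hj, pathWeight, Fin.castSucc_lt_succ.ne']
        · simp [hj, ← ite_and, hcross j]
      · rw [← neg_sub, centeredPrefix_castSucc_sub_succ, T.symm]
        by_cases hj : j = i
        · simp [hj, pathWeight, Fin.castSucc_lt_succ.ne']
        · simpa [hj] using fun h₁ h₂ => (hcross j ⟨h₂, h₁⟩).elim
    · have hi : ∀ {a b}, a = i.castSucc → b = i.succ → (pathGraph (m + 1)).Adj a b :=
        fun ha hb => pathGraph_adj_iff_exists.mpr ⟨i, Or.inl ⟨ha, hb⟩⟩
      have h₁ : b = i.succ → a ≠ i.castSucc := fun hb ha => hadj (hi ha hb)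
      have h₂ : b = i.castSucc → a ≠ i.succ := fun hb ha => hadj (hi hb ha).symm
      rw [T.zero _ _ (by rwa [f.map_adj_iff]), zero_mul]
      simp +contextual [h₁, h₂]
  simp only [Function.comp_apply, RelIso.coe_fn_toEquiv, f.symm_apply_apply, hterm,
    ← Finset.mul_sum, Finset.sum_sub_distrib, Finset.sum_ite_eq', Finset.mem_univ, if_true]

def pathGreen : Matrix (Fin (m + 1)) (Fin (m + 1)) ℝ :=
  ∑ i, (pathWeight f i)⁻¹ • vecMulVec (centeredPrefix i ∘ f.symm) (centeredPrefix i ∘ f.symm)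

lemma lap_mul_pathGreen :
    T.lap * pathGreen f = 1 - ((m + 1 : ℕ) : ℝ)⁻¹ • of fun _ _ => 1 := by
  ext u v
  obtain ⟨a, rfl⟩ := f.surjective u
  obtain ⟨c, rfl⟩ := f.surjective v
  have hcancel : ∀ i, (pathWeight f i)⁻¹ * (T.lap *ᵥ (centeredPrefix i ∘ f.symm)) (f a) =
      (if a = i.castSucc then 1 else 0) - (if a = i.succ then 1 else 0) := fun i => by
    rw [lap_mulVec_centeredPrefix_apply, inv_mul_cancel_left₀ (pathWeight_pos f i).ne']
  simp only [pathGreen, Matrix.mul_sum, Matrix.mul_smul, mul_vecMulVec, Matrix.sum_apply,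
    Matrix.smul_apply, vecMulVec_apply, smul_eq_mul, ← mul_assoc, hcancel]
  simp only [Function.comp_apply, f.symm_apply_apply, sum_sub_ite_mul_centeredPrefix]
  simp [one_apply, f.injective.eq_iff]

lemma centeredPrefix_comp_dotProduct (i : Fin m) (x : Fin (m + 1) → ℝ) :
    (centeredPrefix i ∘ f.symm) ⬝ᵥ (x ∘ f.symm) = centeredPrefix i ⬝ᵥ x :=
  comp_equiv_dotProduct_comp_equiv (centeredPrefix i) x f.symm.toEquiv

lemma ones_vecMul_pathGreen : (fun _ => 1) ᵥ* pathGreen f = 0 := by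
  have h : ∀ i, (fun _ => (1 : ℝ)) ⬝ᵥ (centeredPrefix i ∘ f.symm) = 0 := fun i => by
    have := centeredPrefix_comp_dotProduct f i (fun _ => 1)
    rw [dotProduct_comm]
    simpa [dotProduct, sum_centeredPrefix] using this
  simp [pathGreen, vecMul_sum, vecMul_smul, vecMul_vecMulVec, h]

lemma trace_pathGreen :
    (pathGreen f).trace = ∑ i : Fin m, (i + 1) * (m - i) / ((m + 1) * pathWeight f i) := by
  simp only [pathGreen, trace_sum, trace_smul, trace_vecMulVec, centeredPrefix_comp_dotProduct,
    centeredPrefix_dotProduct_self, smul_eq_mul]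
  refine Finset.sum_congr rfl fun i _ => ?_
  field_simp

theorem sumInvEig_lap_eq_sum_pathWeight :
    sumInvEig T.lap = ∑ i : Fin m, (i + 1) * (m - i) / ((m + 1) * pathWeight f i) := by
  rw [sumInvEig_eq_trace T.lap_isHermitian T.lap_mulVec_one (lap_mul_pathGreen f)
    (ones_vecMul_pathGreen f), trace_pathGreen]

def pathEdge : Fin m ↪ Sym2 (Fin (m + 1)) where
  toFun i := s(f i.castSucc, f i.succ)
  inj' i j hij := by
    rcases Sym2.eq_iff.mp hij with ⟨h, -⟩ | ⟨h₁, h₂⟩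
    · exact Fin.castSucc_injective m (f.injective h)
    · have h₁ := congrArg Fin.val (f.injective h₁)
      have h₂ := congrArg Fin.val (f.injective h₂)
      simp only [Fin.val_castSucc, Fin.val_succ] at h₁ h₂
      omega

lemma pathEdge_apply (i : Fin m) : pathEdge f i = s(f i.castSucc, f i.succ) := rfl

lemma edgeFinset_eq_map_pathEdge : T.G.edgeFinset = Finset.univ.map (pathEdge f) := by
  ext e
  induction e using Sym2.ind with
  | _ u v =>
    obtain ⟨a, rfl⟩ := f.surjective u
    obtain ⟨c, rfl⟩ := f.surjective v
    simp only [mem_edgeFinset, mem_edgeSet, f.map_adj_iff, pathGraph_adj_iff_exists,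
      Finset.mem_map, Finset.mem_univ, true_and, pathEdge_apply, Sym2.eq_iff, f.injective.eq_iff]
    grind

lemma edgeWeights_eq_map_pathWeight : T.edgeWeights = Finset.univ.val.map (pathWeight f) := by
  rw [WGraph.edgeWeights, edgeFinset_eq_map_pathEdge f, Finset.map_val, Multiset.map_map]
  rfl

end WeightedPath

/-- The paper's `c(e_{i+1})`: edges are indexed from `0` here. -/
def pathEdgeDepth {m : ℕ} (i : Fin m) : ℕ := min (i + 1) (m - i)

lemma IsPolarizedPath.exists_pathWeight_antitone {m : ℕ} {T : WGraph (m + 1)}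
    (hT : IsPolarizedPath T) : ∃ f : pathGraph (m + 1) ≃g T.G, ∀ i j : Fin m,
      pathEdgeDepth i ≤ pathEdgeDepth j → pathWeight f j ≤ pathWeight f i := by
  obtain ⟨f, hf⟩ := hT
  exact ⟨f, fun i j hij => hf i j (by omega) (by omega) (by simpa [pathEdgeDepth] using hij)⟩

lemma succ_mul_sub_eq_pathEdgeDepth_mul {m : ℕ} (i : Fin m) :
    ((i : ℝ) + 1) * (m - i) = pathEdgeDepth i * (m + 1 - pathEdgeDepth i) := by
  have hi : (i : ℕ) < m := i.isLt
  rcases min_cases (i.val + 1) (m - i.val) with ⟨h, -⟩ | ⟨h, -⟩ <;>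
    rw [pathEdgeDepth, h] <;> push_cast [Nat.cast_sub hi.le] <;> ring

theorem Finset.sum_eq_sum_of_antitone_along {ι α β M : Type*} [LinearOrder α] [LinearOrder β]
    [AddCommMonoid M] (g : α → β → M) (c : ι → α) (s : Finset ι) {u v : ι → β}
    (hu : ∀ i ∈ s, ∀ j ∈ s, c i ≤ c j → u j ≤ u i)
    (hv : ∀ i ∈ s, ∀ j ∈ s, c i ≤ c j → v j ≤ v i)
    (huv : s.val.map u = s.val.map v) :
    ∑ i ∈ s, g (c i) (u i) = ∑ i ∈ s, g (c i) (v i) := by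
  induction s using Finset.strongInduction with
  | H s ih =>
    rcases s.eq_empty_or_nonempty with rfl | hne
    · simp
    obtain ⟨i₀, hi₀, hmin⟩ := s.exists_min_image c hne
    have hmax : ∀ {w : ι → β}, (∀ i ∈ s, ∀ j ∈ s, c i ≤ c j → w j ≤ w i) →
        ∀ x ∈ s.val.map w, x ≤ w i₀ := fun hw x hx => by
      obtain ⟨j, hj, rfl⟩ := Multiset.mem_map.mp hx
      exact hw i₀ hi₀ j hj (hmin j hj)
    have heq : u i₀ = v i₀ := le_antisymm
      (hmax hv _ (huv ▸ Multiset.mem_map_of_mem u hi₀))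
      (hmax hu _ (huv ▸ Multiset.mem_map_of_mem v hi₀))
    have hcons : s.val = i₀ ::ₘ (s.erase i₀).val := by
      rw [Finset.erase_val, Multiset.cons_erase hi₀]
    have huv' : (s.erase i₀).val.map u = (s.erase i₀).val.map v := by
      rw [hcons, Multiset.map_cons, Multiset.map_cons, heq] at huv
      exact (Multiset.cons_inj_right _).mp huv
    rw [← Finset.add_sum_erase s _ hi₀, ← Finset.add_sum_erase s _ hi₀, heq,
      ih _ (Finset.erase_ssubset hi₀)
        (fun i hi j hj => hu i (Finset.mem_of_mem_erase hi) j (Finset.mem_of_mem_erase hj))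
        (fun i hi j hj => hv i (Finset.mem_of_mem_erase hi) j (Finset.mem_of_mem_erase hj)) huv']

theorem stmt17_general (W : Multiset ℝ) {n : ℕ}
    (T T' : WGraph n)
    (hw : T.edgeWeights = W) (hw' : T'.edgeWeights = W)
    (hp : IsPolarizedPath T) (hp' : IsPolarizedPath T') :
    sumInvEig T.lap = sumInvEig T'.lap := by
  obtain _ | m := n
  · exact congrArg sumInvEig (Subsingleton.elim _ _)
  obtain ⟨f, hf⟩ := hp.exists_pathWeight_antitone
  obtain ⟨f', hf'⟩ := hp'.exists_pathWeight_antitone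
  rw [sumInvEig_lap_eq_sum_pathWeight f, sumInvEig_lap_eq_sum_pathWeight f']
  simp only [succ_mul_sub_eq_pathEdgeDepth_mul]
  refine Finset.sum_eq_sum_of_antitone_along
    (fun (d : ℕ) (w : ℝ) => d * (m + 1 - d) / ((m + 1) * w))
    pathEdgeDepth _ (fun i _ j _ => hf i j) (fun i _ j _ => hf' i j) ?_
  rw [← edgeWeights_eq_map_pathWeight, ← edgeWeights_eq_map_pathWeight, hw, hw']

theorem stmt17 (W : Multiset ℝ) (hW : ∀ x ∈ W, 0 < x) {n : ℕ}
    (T T' : WGraph n) (hT : T.G.IsTree) (hT' : T'.G.IsTree)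
    (hw : T.edgeWeights = W) (hw' : T'.edgeWeights = W)
    (hp : IsPolarizedPath T) (hp' : IsPolarizedPath T') :
    sumInvEig T.lap = sumInvEig T'.lap :=
  stmt17_general W T T' hw hw' hp hp'
end
end
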